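/- Let l ≥ 5 and let D_l be the root lattice realized inside ℤ^l (with bilinear form b equal to the negative of the standard Euclidean inner product), with simple roots d_i = e_i − e_{i+1} for 1 ≤ i ≤ l−1 and d_l = e_{l−1} + e_l. Embed A₂ into D_l as the sublattice generated by d_l and d_{l−2}, let N = {v ∈ D_l : b(v, d_l) = b(v, d_{l−2}) = 0} be its orthogonal complement, and let R(N) be the root sublattice of N, i.e. the ℤ‑span of {v ∈ N : b(v,v) = −2}. With the glue vectors [1]_{D_l} = ½(Σ_{i=1}^{l−2} i d_i + ½(l−2)d_{l−1} + ½ l d_l), [2]_{D_l} = Σ_{i=1}^{l−2} d_i + ½(d_{l−1}+d_l), [3]_{D_l} = ½(Σ_{i=1}^{l−2} i d_i + ½ l d_{l−1} + ½(l−2) d_l) in ℚ^l, one has: 2·[2]_{D_l} ∈ R(N), but for i = 1 and i = 3 there is no nonzero integer k such that k·[i]_{D_l} ∈ R(N). -/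

import Mathlib

open Finset

/-- Standard basis vector of `ℤˡ`. -/
def stdE (l : ℕ) (i : Fin l) : Fin l → ℤ := Pi.single i 1

/-- Simple roots of the root lattice `D_l`: `dRoot l i` is `d_{i+1}` of the paper
(1-based numbering), i.e. `d_i = e_i − e_{i+1}` for `1 ≤ i ≤ l−1` and
`d_l = e_{l−1} + e_l`. -/
def dRoot (l : ℕ) (i : Fin l) : Fin l → ℤ :=
  if h : (i : ℕ) + 1 < l then stdE l i - stdE l ⟨(i : ℕ) + 1, h⟩
  else stdE l ⟨l - 2, by have := i.isLt; omega⟩ + stdE l i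

/-- The simple roots of `D_l`, viewed in `ℚˡ`. -/
def dRootQ (l : ℕ) (i : Fin l) : Fin l → ℚ := fun j => ((dRoot l i j : ℤ) : ℚ)

/-- Negative of the standard Euclidean inner product on `ℤˡ`. -/
def bD (l : ℕ) (v w : Fin l → ℤ) : ℤ := - ∑ i, v i * w i

/-- The root lattice `D_l`: integer vectors with even coordinate sum. -/
def Dlat (l : ℕ) : Set (Fin l → ℤ) := {v | Even (∑ i, v i)}

/-! Coordinates are numbered from `0` below. A root `v` of `N` satisfies
`v_{l-3} = v_{l-2} = -v_{l-1}`, and three coordinates of equal absolute value fit into a vector of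
norm `2` only if they vanish; so `R(N)` lies in the hyperplane `x_{l-1} = 0`, where `[1]` and `[3]`
have coordinates `±1/2`. On the other hand `[2]` telescopes to `e_0`, and
`2 e_0 = (e_0 - e_1) + (e_0 + e_1)` is a sum of two roots of `N`. -/

lemma eq_zero_of_sum_mul_self_eq_two {ι : Type*} [Fintype ι] {v : ι → ℤ}
    {a b c : ι} (hab : a ≠ b) (hac : a ≠ c) (hbc : b ≠ c) (hva : v a = v b) (hvb : v b = -v c)
    (hv : ∑ j, v j * v j = 2) : v c = 0 := by
  classical
  have hle : ∑ j ∈ {a, b, c}, v j * v j ≤ ∑ j, v j * v j :=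
    Finset.sum_le_sum_of_subset_of_nonneg (Finset.subset_univ _)
      (fun j _ _ => mul_self_nonneg _)
  rw [Finset.sum_insert (by simp [hab, hac]), Finset.sum_insert (by simp [hbc]),
    Finset.sum_singleton, hva, hvb, hv] at hle
  have hsq : v c * v c ≤ 0 := by linarith
  exact mul_self_eq_zero.mp (le_antisymm hsq (mul_self_nonneg _))

lemma not_exists_smul_eq_cast_of_apply_ne_zero {ι : Type*} {R : Submodule ℤ (ι → ℤ)}
    {g : ι → ℚ} (c : ι) (hR : ∀ v ∈ R, v c = 0) (hg : g c ≠ 0) :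
    ¬∃ k : ℤ, k ≠ 0 ∧ ∃ v ∈ R, (fun j => ((v j : ℤ) : ℚ)) = (k : ℚ) • g := by
  rintro ⟨k, hk, v, hv, hvk⟩
  have hc := congrFun hvk c
  simp only [hR v hv, Int.cast_zero, Pi.smul_apply, smul_eq_mul, zero_eq_mul, Int.cast_eq_zero]
    at hc
  tauto

/-- The roots of the orthogonal complement `N` of `A₂ = ⟨d_l, d_{l-2}⟩` in `D_l`; their span is
`R(N)`. -/
def rootsOrthA2 (l : ℕ) (hl : 3 ≤ l) : Set (Fin l → ℤ) :=
  {v | (v ∈ Dlat l ∧ bD l v (dRoot l ⟨l - 1, by omega⟩) = 0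
    ∧ bD l v (dRoot l ⟨l - 3, by omega⟩) = 0) ∧ bD l v v = -2}

/-- The `n`-th standard basis vector of `ℚˡ`, indexed by a natural number (zero for `n ≥ l`) so
that sums of consecutive simple roots telescope. -/
def unitVecQ (l n : ℕ) : Fin l → ℚ := fun j => if (j : ℕ) = n then 1 else 0

section integral

variable {l : ℕ}

lemma bD_eq_neg_dotProduct (v w : Fin l → ℤ) : bD l v w = -(v ⬝ᵥ w) := rfl

lemma bD_stdE_right (v : Fin l → ℤ) (a : Fin l) : bD l v (stdE l a) = -v a := by
  simp [bD_eq_neg_dotProduct, stdE]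

lemma bD_add_right (v w w' : Fin l → ℤ) : bD l v (w + w') = bD l v w + bD l v w' := by
  simp only [bD_eq_neg_dotProduct, dotProduct_add, neg_add]

lemma bD_sub_right (v w w' : Fin l → ℤ) : bD l v (w - w') = bD l v w - bD l v w' := by
  simp only [bD_eq_neg_dotProduct, dotProduct_sub, neg_sub_neg]
  ring

lemma stdE_apply_of_ne {a j : Fin l} (h : j ≠ a) : stdE l a j = 0 :=
  Pi.single_eq_of_ne h _

lemma sum_stdE (a : Fin l) : ∑ j, stdE l a j = 1 := by
  simp [stdE]

lemma stdE_sub_stdE_mem_Dlat (a b : Fin l) : stdE l a - stdE l b ∈ Dlat l := by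
  simp [Dlat, Finset.sum_sub_distrib, sum_stdE]

lemma stdE_add_stdE_mem_Dlat (a b : Fin l) : stdE l a + stdE l b ∈ Dlat l := by
  simp [Dlat, Finset.sum_add_distrib, sum_stdE]

lemma bD_self_stdE_sub_stdE {a b : Fin l} (hab : a ≠ b) :
    bD l (stdE l a - stdE l b) (stdE l a - stdE l b) = -2 := by
  rw [bD_sub_right, bD_stdE_right, bD_stdE_right]
  simp [stdE, hab, hab.symm]

lemma bD_self_stdE_add_stdE {a b : Fin l} (hab : a ≠ b) :
    bD l (stdE l a + stdE l b) (stdE l a + stdE l b) = -2 := by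
  rw [bD_add_right, bD_stdE_right, bD_stdE_right]
  simp [stdE, hab, hab.symm]

lemma dRoot_of_succ_lt (i : Fin l) (h : (i : ℕ) + 1 < l) :
    dRoot l i = stdE l i - stdE l ⟨i + 1, h⟩ :=
  dif_pos h

lemma dRoot_last (hl : 2 ≤ l) :
    dRoot l ⟨l - 1, by omega⟩ = stdE l ⟨l - 2, by omega⟩ + stdE l ⟨l - 1, by omega⟩ :=
  dif_neg (by simp only; omega)

lemma bD_dRoot_last (hl : 2 ≤ l) (v : Fin l → ℤ) :
    bD l v (dRoot l ⟨l - 1, by omega⟩) = -(v ⟨l - 2, by omega⟩ + v ⟨l - 1, by omega⟩) := by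
  rw [dRoot_last hl, bD_add_right, bD_stdE_right, bD_stdE_right]
  ring

lemma bD_dRoot_antepenultimate (hl : 3 ≤ l) (v : Fin l → ℤ) :
    bD l v (dRoot l ⟨l - 3, by omega⟩) = -(v ⟨l - 3, by omega⟩ - v ⟨l - 2, by omega⟩) := by
  rw [dRoot_of_succ_lt _ (by dsimp only; omega), bD_sub_right, bD_stdE_right, bD_stdE_right]
  simp only [show l - 3 + 1 = l - 2 by omega]
  ring

lemma orthogonal_of_apply_eq_zero (hl : 3 ≤ l) {v : Fin l → ℤ}
    (hv : ∀ j : Fin l, l - 3 ≤ (j : ℕ) → v j = 0) :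
    bD l v (dRoot l ⟨l - 1, by omega⟩) = 0 ∧ bD l v (dRoot l ⟨l - 3, by omega⟩) = 0 := by
  rw [bD_dRoot_last (by omega), bD_dRoot_antepenultimate hl,
    hv ⟨l - 1, _⟩ (by dsimp only; omega), hv ⟨l - 2, _⟩ (by dsimp only; omega),
    hv ⟨l - 3, _⟩ le_rfl]
  simp

lemma apply_last_eq_zero_of_mem_rootsOrthA2 (hl : 3 ≤ l) {v : Fin l → ℤ}
    (hv : v ∈ rootsOrthA2 l hl) : v ⟨l - 1, by omega⟩ = 0 := by
  obtain ⟨⟨-, h1, h3⟩, hvv⟩ := hv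
  rw [bD_dRoot_last (by omega)] at h1
  rw [bD_dRoot_antepenultimate hl] at h3
  rw [bD_eq_neg_dotProduct, dotProduct] at hvv
  exact eq_zero_of_sum_mul_self_eq_two (v := v) (a := ⟨l - 3, by omega⟩) (b := ⟨l - 2, by omega⟩)
    (c := ⟨l - 1, by omega⟩) (by simp; omega) (by simp; omega) (by simp; omega)
    (by linarith) (by linarith) (by linarith)

lemma apply_last_eq_zero_of_mem_span_rootsOrthA2 (hl : 3 ≤ l) {v : Fin l → ℤ}
    (hv : v ∈ Submodule.span ℤ (rootsOrthA2 l hl)) : v ⟨l - 1, by omega⟩ = 0 := by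
  have hle : Submodule.span ℤ (rootsOrthA2 l hl) ≤ LinearMap.ker (LinearMap.proj _) :=
    Submodule.span_le.mpr fun w hw => apply_last_eq_zero_of_mem_rootsOrthA2 hl hw
  exact hle hv

lemma two_smul_stdE_mem_span_rootsOrthA2 (hl : 3 ≤ l) {a b : Fin l} (hab : a ≠ b)
    (ha : (a : ℕ) < l - 3) (hb : (b : ℕ) < l - 3) :
    2 • stdE l a ∈ Submodule.span ℤ (rootsOrthA2 l hl) := by
  have hfar : ∀ j : Fin l, l - 3 ≤ (j : ℕ) → stdE l a j = 0 ∧ stdE l b j = 0 := fun j hj =>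
    ⟨stdE_apply_of_ne (by rintro rfl; omega), stdE_apply_of_ne (by rintro rfl; omega)⟩
  rw [show 2 • stdE l a = (stdE l a - stdE l b) + (stdE l a + stdE l b) by abel]
  refine add_mem
    (Submodule.subset_span ⟨⟨stdE_sub_stdE_mem_Dlat a b, ?_⟩, bD_self_stdE_sub_stdE hab⟩)
    (Submodule.subset_span ⟨⟨stdE_add_stdE_mem_Dlat a b, ?_⟩, bD_self_stdE_add_stdE hab⟩)
  all_goals
    refine orthogonal_of_apply_eq_zero hl fun j hj => ?_
    simp [(hfar j hj).1, (hfar j hj).2]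

end integral

section rational

variable {l : ℕ}

lemma intCast_two_smul_stdE (a : Fin l) :
    (fun j => (((2 • stdE l a) j : ℤ) : ℚ)) = (2 : ℚ) • unitVecQ l a := by
  funext j
  simp [stdE, unitVecQ, Pi.single_apply, Fin.ext_iff]

lemma dRootQ_of_succ_lt (i : Fin l) (h : (i : ℕ) + 1 < l) :
    dRootQ l i = unitVecQ l i - unitVecQ l (i + 1) := by
  funext j
  simp [dRootQ, dRoot_of_succ_lt i h, stdE, unitVecQ, Pi.single_apply, Fin.ext_iff]

lemma dRootQ_penultimate (hl : 2 ≤ l) :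
    dRootQ l ⟨l - 2, by omega⟩ = unitVecQ l (l - 2) - unitVecQ l (l - 1) := by
  rw [dRootQ_of_succ_lt _ (by dsimp only; omega)]
  simp only [show l - 2 + 1 = l - 1 by omega]

lemma dRootQ_last (hl : 2 ≤ l) :
    dRootQ l ⟨l - 1, by omega⟩ = unitVecQ l (l - 2) + unitVecQ l (l - 1) := by
  funext j
  simp [dRootQ, dRoot_last hl, stdE, unitVecQ, Pi.single_apply, Fin.ext_iff]

lemma sum_dRootQ_filter_le (hl : 3 ≤ l) :
    ∑ i ∈ univ.filter (fun i : Fin l => (i : ℕ) ≤ l - 3), dRootQ l i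
      = unitVecQ l 0 - unitVecQ l (l - 2) := by
  have hterm : ∀ i : Fin l, (if (i : ℕ) ≤ l - 3 then dRootQ l i else 0)
      = if (i : ℕ) ≤ l - 3 then unitVecQ l i - unitVecQ l (i + 1) else 0 := fun i => by
    split_ifs with hi
    exacts [dRootQ_of_succ_lt i (by omega), rfl]
  have hrange : (Finset.range l).filter (· ≤ l - 3) = Finset.range (l - 2) := by
    ext n
    simp only [Finset.mem_filter, Finset.mem_range]
    omega
  rw [Finset.sum_filter, Finset.sum_congr rfl fun i _ => hterm i,
    Fin.sum_univ_eq_sum_range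
      (fun n => if n ≤ l - 3 then unitVecQ l n - unitVecQ l (n + 1) else 0),
    ← Finset.sum_filter, hrange, Finset.sum_range_sub']

lemma sum_smul_dRootQ_filter_le_apply_last (hl : 3 ≤ l) (f : Fin l → ℚ) :
    (∑ i ∈ univ.filter (fun i : Fin l => (i : ℕ) ≤ l - 3), f i • dRootQ l i) ⟨l - 1, by omega⟩
      = 0 := by
  rw [Finset.sum_apply]
  refine Finset.sum_eq_zero fun i hi => ?_
  rw [Finset.mem_filter] at hi
  rw [dRootQ_of_succ_lt i (by omega)]
  simp [unitVecQ, show l - 1 ≠ i by omega, show l - 1 ≠ i + 1 by omega]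

lemma glue2_eq_unitVecQ_zero (hl : 3 ≤ l) :
    (∑ i ∈ univ.filter (fun i : Fin l => (i : ℕ) ≤ l - 3), dRootQ l i)
      + (1 / 2 : ℚ) • (dRootQ l ⟨l - 2, by omega⟩ + dRootQ l ⟨l - 1, by omega⟩)
      = unitVecQ l 0 := by
  rw [sum_dRootQ_filter_le hl, dRootQ_penultimate (by omega), dRootQ_last (by omega)]
  module

lemma glue_apply_last (hl : 3 ≤ l) (f : Fin l → ℚ) (c d : ℚ) :
    ((1 / 2 : ℚ) • ((∑ i ∈ univ.filter (fun i : Fin l => (i : ℕ) ≤ l - 3), f i • dRootQ l i)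
      + c • dRootQ l ⟨l - 2, by omega⟩ + d • dRootQ l ⟨l - 1, by omega⟩)) ⟨l - 1, by omega⟩
      = (d - c) / 2 := by
  rw [dRootQ_penultimate (by omega), dRootQ_last (by omega)]
  simp only [Pi.smul_apply, Pi.add_apply, Pi.sub_apply, smul_eq_mul,
    sum_smul_dRootQ_filter_le_apply_last hl]
  simp only [unitVecQ, show l - 1 ≠ l - 2 by omega, ↓reduceIte]
  ring

end rational

/-- Lemma 2.3: with `A₂ = ⟨d_l, d_{l−2}⟩ ↪ D_l` (`l ≥ 5`), `N` its orthogonal complement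
in `D_l` and `R(N)` the root sublattice of `N`, one has `2·[2]_{D_l} ∈ R(N)`, but for
`i = 1, 3` there is no nonzero integer `k` with `k·[i]_{D_l} ∈ R(N)`. -/
theorem stmt4 (l : ℕ) (hl : 5 ≤ l)
    -- the orthogonal complement of `A₂ = ⟨d_l, d_{l−2}⟩` in `D_l`
    (N : Set (Fin l → ℤ))
    (hN : N = {v | v ∈ Dlat l ∧ bD l v (dRoot l ⟨l - 1, by omega⟩) = 0
        ∧ bD l v (dRoot l ⟨l - 3, by omega⟩) = 0})
    -- its root sublattice
    (R : Submodule ℤ (Fin l → ℤ))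
    (hR : R = Submodule.span ℤ {v | v ∈ N ∧ bD l v v = -2})
    -- the glue vectors `[1]_{D_l}`, `[2]_{D_l}`, `[3]_{D_l}` of `ℚˡ`
    (glue1 glue2 glue3 : Fin l → ℚ)
    (hglue1 : glue1 = (1 / 2 : ℚ) •
        ((∑ i ∈ univ.filter (fun i : Fin l => (i : ℕ) ≤ l - 3),
            (((i : ℕ) : ℚ) + 1) • dRootQ l i)
          + (((l : ℚ) - 2) / 2) • dRootQ l ⟨l - 2, by omega⟩
          + ((l : ℚ) / 2) • dRootQ l ⟨l - 1, by omega⟩))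
    (hglue2 : glue2 = (∑ i ∈ univ.filter (fun i : Fin l => (i : ℕ) ≤ l - 3), dRootQ l i)
        + (1 / 2 : ℚ) • (dRootQ l ⟨l - 2, by omega⟩ + dRootQ l ⟨l - 1, by omega⟩))
    (hglue3 : glue3 = (1 / 2 : ℚ) •
        ((∑ i ∈ univ.filter (fun i : Fin l => (i : ℕ) ≤ l - 3),
            (((i : ℕ) : ℚ) + 1) • dRootQ l i)
          + ((l : ℚ) / 2) • dRootQ l ⟨l - 2, by omega⟩
          + (((l : ℚ) - 2) / 2) • dRootQ l ⟨l - 1, by omega⟩)) :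
    -- `2·[2]_{D_l} ∈ R(N)`
    (∃ v ∈ R, (fun j => ((v j : ℤ) : ℚ)) = (2 : ℚ) • glue2)
    -- no nonzero multiple of `[1]_{D_l}` lies in `R(N)`
    ∧ ¬(∃ k : ℤ, k ≠ 0 ∧ ∃ v ∈ R, (fun j => ((v j : ℤ) : ℚ)) = (k : ℚ) • glue1)
    -- no nonzero multiple of `[3]_{D_l}` lies in `R(N)`
    ∧ ¬(∃ k : ℤ, k ≠ 0 ∧ ∃ v ∈ R, (fun j => ((v j : ℤ) : ℚ)) = (k : ℚ) • glue3) := by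
  have hR' : R = Submodule.span ℤ (rootsOrthA2 l (by omega)) := by
    rw [hR, hN]
    rfl
  have hlast : ∀ v ∈ R, v ⟨l - 1, by omega⟩ = 0 := fun v hv =>
    apply_last_eq_zero_of_mem_span_rootsOrthA2 (by omega) (hR' ▸ hv)
  refine ⟨⟨2 • stdE l ⟨0, by omega⟩, ?_, ?_⟩,
    not_exists_smul_eq_cast_of_apply_ne_zero _ hlast ?_,
    not_exists_smul_eq_cast_of_apply_ne_zero _ hlast ?_⟩
  · rw [hR']
    exact two_smul_stdE_mem_span_rootsOrthA2 _ (b := ⟨1, by omega⟩) (by simp)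
      (by dsimp only; omega) (by dsimp only; omega)
  · rw [hglue2, glue2_eq_unitVecQ_zero (by omega)]
    exact intCast_two_smul_stdE _
  · rw [hglue1, glue_apply_last (by omega)]
    ring_nf
    norm_num
  · rw [hglue3, glue_apply_last (by omega)]
    ring_nf
    norm_num
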